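/- Let L ≥ 2 and n = 3L − 2, and work over ZMod 2. Define the permutation π on {0, …, n−1} by π(i) = L−1−i for 0 ≤ i < L, π(i) = 3L−2−i for L ≤ i < 2L−1, and π(i) = 5L−4−i for 2L−1 ≤ i < 3L−2, with permutation matrix Π over ZMod 2. Define T as the L×(L−1) matrix over ZMod 2 with T_{j,k} = 1 iff k = j or k = j−1, A as the (L−1)×(L−1) path adjacency matrix with A_{k,k+1} = A_{k+1,k} = 1 and all other entries 0, I as the (L−1)×(L−1) identity, and the n×n block matrix K = [[0_L, T, T], [Tᵀ, I, I + A], [Tᵀ, I + A, I]]. Then K is symmetric (Kᵀ = K), π is an involution so Π·Πᵀ = 1, and consequently the 2n×2n block matrix S = [[Π, K·Π], [0, Π]] is symplectic over ZMod 2: S·Ω·Sᵀ = Ω with Ω = [[0, I_n], [−I_n, 0]]. -/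

import Mathlib

open Matrix

/-- The longitudinal-reflection permutation of Eq. (31):
`π(i) = L−1−i` for `0 ≤ i < L`, `π(i) = 3L−2−i` for `L ≤ i < 2L−1`,
and `π(i) = 5L−4−i` for `2L−1 ≤ i < 3L−2`. -/
def piTC (L i : ℕ) : ℕ :=
  if i < L then L - 1 - i
  else if i < 2 * L - 1 then 3 * L - 2 - i
  else 5 * L - 4 - i

/-- The permutation matrix `Π_TC` of `π` over `ZMod 2`, on `n = 3L−2` indices. -/
def PmatTC (L : ℕ) : Matrix (Fin (3 * L - 2)) (Fin (3 * L - 2)) (ZMod 2) :=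
  Matrix.of fun i j => if piTC L (i : ℕ) = (j : ℕ) then 1 else 0

/-- The `L×(L−1)` rung-rail incidence matrix `T`, with `T_{j,k} = 1` iff `k = j`
or `k = j−1` (encoded as `k + 1 = j`). -/
def Tmat (L : ℕ) : Matrix (Fin L) (Fin (L - 1)) (ZMod 2) :=
  Matrix.of fun j k => if (k : ℕ) = (j : ℕ) ∨ (k : ℕ) + 1 = (j : ℕ) then 1 else 0

/-- The `(L−1)×(L−1)` path adjacency matrix `A`, with `A_{k,k+1} = A_{k+1,k} = 1`. -/
def Amat (L : ℕ) : Matrix (Fin (L - 1)) (Fin (L - 1)) (ZMod 2) :=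
  Matrix.of fun k l => if (k : ℕ) + 1 = (l : ℕ) ∨ (l : ℕ) + 1 = (k : ℕ) then 1 else 0

/-- The block row `[T | T]` of `K`. -/
def BTT (L : ℕ) : Matrix (Fin L) (Fin (L - 1) ⊕ Fin (L - 1)) (ZMod 2) :=
  Matrix.of fun i j => Sum.elim (Tmat L i) (Tmat L i) j

/-- `K` in block form `[[0_L, T, T], [Tᵀ, I, I+A], [Tᵀ, I+A, I]]`, on the index
type `Fin L ⊕ (Fin (L−1) ⊕ Fin (L−1))` (rungs, left rail, right rail). -/
def KblkTC (L : ℕ) :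
    Matrix (Fin L ⊕ (Fin (L - 1) ⊕ Fin (L - 1)))
      (Fin L ⊕ (Fin (L - 1) ⊕ Fin (L - 1))) (ZMod 2) :=
  Matrix.fromBlocks 0 (BTT L) (BTT L)ᵀ
    (Matrix.fromBlocks 1 (1 + Amat L) (1 + Amat L) 1)

/-- The identification of the block index type with `Fin (3L−2)`, sending rungs to
indices `[0, L)`, left-rail edges to `[L, 2L−1)` and right-rail edges to `[2L−1, 3L−2)`. -/
def eTC (L : ℕ) : (Fin L ⊕ (Fin (L - 1) ⊕ Fin (L - 1))) ≃ Fin (3 * L - 2) :=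
  ((Equiv.sumCongr (Equiv.refl (Fin L)) finSumFinEquiv).trans finSumFinEquiv).trans
    (finCongr (by omega))

/-- The matrix `K_TC` of Eq. (32), as an `n×n` matrix with `n = 3L−2`. -/
def KTC (L : ℕ) : Matrix (Fin (3 * L - 2)) (Fin (3 * L - 2)) (ZMod 2) :=
  Matrix.reindex (eTC L) (eTC L) (KblkTC L)

/-- The standard symplectic form `Ω = [[0, I_n], [−I_n, 0]]`. -/
def OmegaForm (n : ℕ) : Matrix (Fin n ⊕ Fin n) (Fin n ⊕ Fin n) (ZMod 2) :=
  Matrix.fromBlocks 0 1 (-1) 0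

lemma piTC_lt {L i : ℕ} (hi : i < 3 * L - 2) : piTC L i < 3 * L - 2 := by
  unfold piTC
  split_ifs <;> omega

lemma piTC_piTC {L i : ℕ} (hi : i < 3 * L - 2) : piTC L (piTC L i) = i := by
  unfold piTC
  split_ifs <;> omega

def piTCPerm (L : ℕ) : Equiv.Perm (Fin (3 * L - 2)) :=
  Function.Involutive.toPerm (fun i => ⟨piTC L i, piTC_lt i.isLt⟩)
    fun i => Fin.ext (piTC_piTC i.isLt)

@[simp]
lemma piTCPerm_apply_val (L : ℕ) (i : Fin (3 * L - 2)) : (piTCPerm L i : ℕ) = piTC L i := rfl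

lemma PmatTC_eq_permMatrix (L : ℕ) : PmatTC L = (piTCPerm L).permMatrix (ZMod 2) := by
  ext i j
  simp [PmatTC, Fin.ext_iff, eq_comm]

lemma Matrix.permMatrix_mul_transpose_self {n R : Type*} [Fintype n] [DecidableEq n]
    [NonAssocSemiring R] (σ : Equiv.Perm n) :
    σ.permMatrix R * (σ.permMatrix R)ᵀ = 1 := by
  rw [transpose_permMatrix, ← permMatrix_mul, inv_mul_cancel, permMatrix_one]

/-- The upper-right block of the product is `-K P Pᵀ + P Pᵀ K = -K + K = 0`. -/
lemma Matrix.fromBlocks_mul_symplectic_mul_transpose {n R : Type*} [Fintype n] [DecidableEq n]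
    [CommRing R] {P K : Matrix n n R} (hP : P * Pᵀ = 1) (hK : Kᵀ = K) :
    fromBlocks P (K * P) 0 P * fromBlocks 0 1 (-1) 0 * (fromBlocks P (K * P) 0 P)ᵀ =
      fromBlocks 0 1 (-1) 0 := by
  have hKP : K * P * Pᵀ = K := by rw [Matrix.mul_assoc, hP, Matrix.mul_one]
  have hPK : P * (Pᵀ * K) = K := by rw [← Matrix.mul_assoc, hP, Matrix.one_mul]
  rw [fromBlocks_transpose, fromBlocks_multiply, fromBlocks_multiply]
  simp [transpose_mul, hK, hKP, hPK, hP]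

lemma Amat_transpose (L : ℕ) : (Amat L)ᵀ = Amat L := by
  ext k l
  simp only [transpose_apply, Amat, of_apply, or_comm]

lemma KTC_transpose (L : ℕ) : (KTC L)ᵀ = KTC L := by
  have hblk : (KblkTC L)ᵀ = KblkTC L := by
    simp [KblkTC, fromBlocks_transpose, transpose_add, Amat_transpose]
  rw [KTC, transpose_reindex, hblk]

theorem toric_ladder_symmetry_symplectic_general (L : ℕ) :
    (KTC L)ᵀ = KTC L
    ∧ (∀ i : Fin (3 * L - 2), piTC L (piTC L (i : ℕ)) = (i : ℕ))
    ∧ PmatTC L * (PmatTC L)ᵀ = 1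
    ∧ Matrix.fromBlocks (PmatTC L) (KTC L * PmatTC L) 0 (PmatTC L) *
          OmegaForm (3 * L - 2) *
          (Matrix.fromBlocks (PmatTC L) (KTC L * PmatTC L) 0 (PmatTC L))ᵀ
        = OmegaForm (3 * L - 2) := by
  have hP : PmatTC L * (PmatTC L)ᵀ = 1 := by
    rw [PmatTC_eq_permMatrix, permMatrix_mul_transpose_self]
  exact ⟨KTC_transpose L, fun i => piTC_piTC i.isLt, hP,
    fromBlocks_mul_symplectic_mul_transpose hP (KTC_transpose L)⟩

/-- Eqs. (29)–(32) of the paper: for the open `2×L` Toric-code ladder with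
`n = 3L−2` edge qubits, `K_TC` is symmetric, `π_TC` is an involution (so
`Π_TC·Π_TCᵀ = 1`), and consequently `S_TC = [[Π_TC, K_TC·Π_TC], [0, Π_TC]]`
is symplectic over `ZMod 2`. -/
theorem toric_ladder_symmetry_symplectic (L : ℕ) (hL : 2 ≤ L) :
    (KTC L)ᵀ = KTC L
    ∧ (∀ i : Fin (3 * L - 2), piTC L (piTC L (i : ℕ)) = (i : ℕ))
    ∧ PmatTC L * (PmatTC L)ᵀ = 1
    ∧ Matrix.fromBlocks (PmatTC L) (KTC L * PmatTC L) 0 (PmatTC L) *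
          OmegaForm (3 * L - 2) *
          (Matrix.fromBlocks (PmatTC L) (KTC L * PmatTC L) 0 (PmatTC L))ᵀ
        = OmegaForm (3 * L - 2) :=
  toric_ladder_symmetry_symplectic_general L
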